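/- arXiv:2203.02343 — 6 statements merged into one kernel-verified Lean document; each statement's English description precedes it below -/
import Mathlib

section
/- Let V be an approval profile over candidates C with approval score function S_V, and suppose candidate a dominates candidate b, i.e., every voter who approves b also approves a and at least one voter approves a but not b (so S_V(a) > S_V(b) and S_V(a) - S_V(ax) ≥ S_V(b) - S_V(bx) for all x). Then for any α with 0 ≤ α < 1 and any candidate x ∉ {a,b}, the α-AV pair score f(x,a) = S_V(x) + S_V(a) - α·S_V({x,a}) is strictly greater than f(x,b) = S_V(x) + S_V(b) - α·S_V({x,b}). -/
/-- Approval score of candidate `c`: number of voters approving `c`. -/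
def appScore {C : Type*} [DecidableEq C] {n : ℕ} (A : Fin n → Finset C) (c : C) : ℕ :=
  (Finset.univ.filter (fun i => c ∈ A i)).card

/-- Pair score: number of voters approving both `x` and `y`. -/
def pairScore {C : Type*} [DecidableEq C] {n : ℕ} (A : Fin n → Finset C) (x y : C) : ℕ :=
  (Finset.univ.filter (fun i => x ∈ A i ∧ y ∈ A i)).card

/-- `a` dominates `b`: every voter approving `b` approves `a`,
and some voter approves `a` but not `b`. -/
def Dominates {C : Type*} [DecidableEq C] {n : ℕ} (A : Fin n → Finset C) (a b : C) : Prop :=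
  (∀ i, b ∈ A i → a ∈ A i) ∧ (∃ i, a ∈ A i ∧ b ∉ A i)

/-- If `a` dominates `b`, then for any `0 ≤ α < 1` and any candidate `x ∉ {a,b}`,
the α-AV pair score of `{x,a}` strictly exceeds that of `{x,b}`. -/
theorem alphaAV_strict {C : Type*} [DecidableEq C] {n : ℕ} (A : Fin n → Finset C)
    (a b x : C) (hdom : Dominates A a b)
    (α : ℚ) (hα0 : 0 ≤ α) (hα1 : α < 1) (hxa : x ≠ a) (hxb : x ≠ b) :
    (appScore A x : ℚ) + (appScore A a : ℚ) - α * (pairScore A x a : ℚ)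
      > (appScore A x : ℚ) + (appScore A b : ℚ) - α * (pairScore A x b : ℚ) := by
  obtain ⟨hsub, i0, hi0a, hi0b⟩ := hdom
  set T : Finset (Fin n) := Finset.univ.filter (fun i => a ∈ A i ∧ b ∉ A i) with hT
  set S : Finset (Fin n) := Finset.univ.filter (fun i => x ∈ A i ∧ a ∈ A i ∧ b ∉ A i) with hS
  have hST : S ⊆ T := by
    intro i hi
    simp only [hS, hT, Finset.mem_filter] at *
    tauto
  have hTpos : 1 ≤ T.card := by
    refine Finset.card_pos.mpr ⟨i0, ?_⟩
    simp [hT, hi0a, hi0b]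
  have hSa : appScore A a = appScore A b + T.card := by
    unfold appScore
    have := Finset.card_filter_add_card_filter_not
      (s := Finset.univ.filter (fun i : Fin n => a ∈ A i)) (p := fun i => b ∈ A i)
    rw [Finset.filter_filter, Finset.filter_filter] at this
    have h1 : Finset.univ.filter (fun i : Fin n => a ∈ A i ∧ b ∈ A i)
        = Finset.univ.filter (fun i : Fin n => b ∈ A i) := by
      apply Finset.filter_congr; intro i _; constructor <;> intro h
      · exact h.2
      · exact ⟨hsub i h, h⟩
    rw [h1] at this
    rw [← this, hT]
  have hPa : pairScore A x a = pairScore A x b + S.card := by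
    unfold pairScore
    have := Finset.card_filter_add_card_filter_not
      (s := Finset.univ.filter (fun i : Fin n => x ∈ A i ∧ a ∈ A i)) (p := fun i => b ∈ A i)
    rw [Finset.filter_filter, Finset.filter_filter] at this
    have h1 : Finset.univ.filter (fun i : Fin n => (x ∈ A i ∧ a ∈ A i) ∧ b ∈ A i)
        = Finset.univ.filter (fun i : Fin n => x ∈ A i ∧ b ∈ A i) := by
      apply Finset.filter_congr; intro i _; constructor <;> intro h
      · exact ⟨h.1.1, h.2⟩
      · exact ⟨⟨h.1, hsub i h.2⟩, h.2⟩
    have h2 : Finset.univ.filter (fun i : Fin n => (x ∈ A i ∧ a ∈ A i) ∧ ¬ b ∈ A i) = S := by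
      apply Finset.filter_congr; intro i _; tauto
    rw [h1, h2] at this
    rw [← this]
  have hcard : (S.card : ℚ) ≤ (T.card : ℚ) := by
    exact_mod_cast Finset.card_le_card hST
  have hT1 : (1 : ℚ) ≤ (T.card : ℚ) := by exact_mod_cast hTpos
  rw [hSa, hPa]
  push_cast
  have : α * (S.card : ℚ) < (T.card : ℚ) := by
    calc α * (S.card : ℚ) ≤ α * (T.card : ℚ) := by nlinarith
    _ < 1 * (T.card : ℚ) := by nlinarith
    _ = (T.card : ℚ) := one_mul _
  nlinarith
end

section
/- Suppose in approval profile V no candidate is approved in every nonempty ballot, and a' is a perfect approval-clone of a. If a is an approval winner in V, then there is a candidate x ∉ {a,a'} with f_{V'}(x,a) ≥ S_V(a) + 1 > S_V(a) = f_{V'}(a,a'), where f is the Chamberlin–Courant pair score; hence {a,a'} is never a CCAV-winning committee in the cloned profile V'. -/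
/-- Chamberlin–Courant pair score `f_V(x,y) = S_V(x) + S_V(y) - S_V({x,y})`. -/
def ccPair {C : Type*} [DecidableEq C] {n : ℕ} (A : Fin n → Finset C) (x y : C) : ℤ :=
  (appScore A x : ℤ) + (appScore A y : ℤ) - (pairScore A x y : ℤ)

/-- If no candidate of `S` is approved in every nonempty ballot, `a ∈ S` is an
approval winner, and `a'` is a fresh perfect clone of `a`, then some candidate
`x ∈ S` with `x ≠ a` satisfies `f_{V'}(x,a) ≥ S_V(a)+1 > S_V(a) = f_{V'}(a,a')`;
hence `{a,a'}` is never a CCAV-winning committee in the cloned profile. -/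
theorem cc_clone_never_pair {C : Type*} [DecidableEq C] {n : ℕ}
    (S : Finset C) (A A' : Fin n → Finset C) (a a' : C)
    (haS : a ∈ S) (ha'S : a' ∉ S) (hball : ∀ i, A i ⊆ S)
    (hnou : ∀ c ∈ S, ∃ i, A i ≠ ∅ ∧ c ∉ A i)
    (hwin : ∀ c ∈ S, appScore A c ≤ appScore A a)
    (hclone : ∀ i, A' i = if a ∈ A i then insert a' (A i) else A i) :
    ∃ x ∈ S, x ≠ a ∧
      ccPair A' x a ≥ (appScore A a : ℤ) + 1 ∧
      (appScore A a : ℤ) + 1 > ccPair A' a a' ∧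
      ccPair A' a a' = (appScore A a : ℤ) := by
  -- membership facts about A'
  have hmem : ∀ (c : C), c ≠ a' → ∀ i, (c ∈ A' i ↔ c ∈ A i) := by
    intro c hc i
    rw [hclone i]
    split_ifs with h
    · simp [Finset.mem_insert, hc]
    · rfl
  have hmem' : ∀ i, (a' ∈ A' i ↔ a ∈ A i) := by
    intro i
    rw [hclone i]
    split_ifs with h
    · simp [h]
    · constructor
      · intro hx; exact absurd (hball i hx) ha'S
      · intro hx; exact absurd hx h
  have haa' : a ≠ a' := fun h => ha'S (h ▸ haS)
  -- get the witness voter and candidate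
  obtain ⟨i, hne, hna⟩ := hnou a haS
  obtain ⟨x, hx⟩ := Finset.nonempty_iff_ne_empty.2 hne
  have hxS : x ∈ S := hball i hx
  have hxa : x ≠ a := fun h => hna (h ▸ hx)
  have hxa' : x ≠ a' := fun h => ha'S (h ▸ hxS)
  refine ⟨x, hxS, hxa, ?_, ?_, ?_⟩
  · -- f_{V'}(x,a) ≥ S_V(a) + 1
    have hAx : appScore A' x = appScore A x := by
      unfold appScore; congr 1; apply Finset.filter_congr; intro j _
      simp [hmem x hxa' j]
    have hAa : appScore A' a = appScore A a := by
      unfold appScore; congr 1; apply Finset.filter_congr; intro j _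
      simp [hmem a haa' j]
    have hP : pairScore A' x a = pairScore A x a := by
      unfold pairScore; congr 1; apply Finset.filter_congr; intro j _
      simp [hmem x hxa' j, hmem a haa' j]
    have key : appScore A a + 1 ≤ appScore A x + appScore A a - pairScore A x a ∧
        pairScore A x a ≤ appScore A x := by
      classical
      have hunion :
          (Finset.univ.filter (fun j => x ∈ A j)) ∪
            (Finset.univ.filter (fun j => a ∈ A j)) =
          Finset.univ.filter (fun j => x ∈ A j ∨ a ∈ A j) := by
        rw [Finset.filter_or]
      have hinter :
          (Finset.univ.filter (fun j => x ∈ A j)) ∩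
            (Finset.univ.filter (fun j => a ∈ A j)) =
          Finset.univ.filter (fun j => x ∈ A j ∧ a ∈ A j) := by
        rw [Finset.filter_and]
      have hcards := Finset.card_union_add_card_inter
        (Finset.univ.filter (fun j => x ∈ A j))
        (Finset.univ.filter (fun j => a ∈ A j))
      rw [hunion, hinter] at hcards
      have hle : pairScore A x a ≤ appScore A x := by
        unfold pairScore appScore
        apply Finset.card_le_card
        intro j hj
        simp only [Finset.mem_filter] at hj ⊢
        exact ⟨hj.1, hj.2.1⟩
      refine ⟨?_, hle⟩
      have hsub : insert i (Finset.univ.filter (fun j => a ∈ A j)) ⊆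
          Finset.univ.filter (fun j => x ∈ A j ∨ a ∈ A j) := by
        intro j hj
        rcases Finset.mem_insert.1 hj with rfl | hj
        · simp [hx]
        · simp only [Finset.mem_filter] at hj ⊢
          exact ⟨hj.1, Or.inr hj.2⟩
      have hni : i ∉ Finset.univ.filter (fun j => a ∈ A j) := by
        simp [hna]
      have hcard1 : (Finset.univ.filter (fun j => a ∈ A j)).card + 1 ≤
          (Finset.univ.filter (fun j => x ∈ A j ∨ a ∈ A j)).card := by
        have := Finset.card_le_card hsub
        rw [Finset.card_insert_of_notMem hni] at this
        omega
      unfold appScore pairScore at hle ⊢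
      omega
    unfold ccPair
    rw [hAx, hAa, hP]
    have h1 := key.1
    have h2 := key.2
    unfold appScore pairScore at h1 h2 ⊢
    omega
  · -- strict inequality
    have : ccPair A' a a' = (appScore A a : ℤ) := by
      have hAa : appScore A' a = appScore A a := by
        unfold appScore; congr 1; apply Finset.filter_congr; intro j _
        simp [hmem a haa' j]
      have hAa' : appScore A' a' = appScore A a := by
        unfold appScore; congr 1; apply Finset.filter_congr; intro j _
        simp [hmem' j]
      have hP : pairScore A' a a' = appScore A a := by
        unfold pairScore appScore; congr 1; apply Finset.filter_congr; intro j _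
        simp [hmem a haa' j, hmem' j]
      unfold ccPair
      rw [hAa, hAa', hP]; ring
    rw [this]; omega
  · have hAa : appScore A' a = appScore A a := by
      unfold appScore; congr 1; apply Finset.filter_congr; intro j _
      simp [hmem a haa' j]
    have hAa' : appScore A' a' = appScore A a := by
      unfold appScore; congr 1; apply Finset.filter_congr; intro j _
      simp [hmem' j]
    have hP : pairScore A' a a' = appScore A a := by
      unfold pairScore appScore; congr 1; apply Finset.filter_congr; intro j _
      simp [hmem a haa' j, hmem' j]
    unfold ccPair
    rw [hAa, hAa', hP]; ring
end

section
/- Consider voters distributed on [-1,1] with triangular density f(t) = (1-|t|)/2, each voter at position t approving exactly the candidates within distance d of t, where 0 < d < 1. Fix the first finalist at position 0. For a candidate at position x with 0 ≤ x ≤ d ≤ 1-d, the α-seqAV objective S(x) = ∫_{x-d}^{x+d} f(t)dt − α∫_{x-d}^{d} f(t)dt equals (1/2)(x²(α−2)/2 + xα(1−d)) + C for a constant C independent of x, and hence for α ≤ 2d it is maximized on [0,d] at x* = α(1−d)/(2−α). -/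
/-! On `0 ≤ x ≤ d` all integration bounds straddle `0` in a known way, so the antiderivative
`s / 2 - s * |s| / 4` of the density turns `seqScore` into a quadratic in `x` with leading
coefficient `(α - 2) / 4 < 0`; its vertex `α (1 - d) / (2 - α)` lies in `[0, d]` iff `α ≤ 2d`. -/

open intervalIntegral

/-- α-seqAV objective in the continuous triangular model: approval mass of the
candidate at `x` minus `α` times the mass shared with the first finalist at `0`. -/
noncomputable def seqScore (d α x : ℝ) : ℝ :=
  (∫ t in (x - d)..(x + d), (1 - |t|) / 2) - α * ∫ t in (x - d)..d, (1 - |t|) / 2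

lemma hasDerivAt_mul_abs (t : ℝ) : HasDerivAt (fun s : ℝ => s * |s|) (2 * |t|) t := by
  rcases lt_trichotomy t 0 with ht | rfl | ht
  · have h : HasDerivAt (fun s : ℝ => -(s * s)) (2 * |t|) t := by
      refine ((hasDerivAt_id' t).mul (hasDerivAt_id' t)).neg.congr_deriv ?_
      rw [abs_of_neg ht]
      ring
    refine h.congr_of_eventuallyEq ?_
    filter_upwards [eventually_lt_nhds ht] with s hs
    simp [abs_of_neg hs]
  · have hsmall : (fun h : ℝ => h * |h|) =o[nhds 0] fun h => h := by
      simpa using (Asymptotics.isBigO_refl (fun h : ℝ => h) _).mul_isLittleO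
        ((Asymptotics.isLittleO_one_iff ℝ).2 (continuous_abs.tendsto' 0 0 abs_zero))
    simpa [hasDerivAt_iff_isLittleO_nhds_zero] using hsmall
  · have h : HasDerivAt (fun s : ℝ => s * s) (2 * |t|) t := by
      refine ((hasDerivAt_id' t).mul (hasDerivAt_id' t)).congr_deriv ?_
      rw [abs_of_pos ht]
      ring
    refine h.congr_of_eventuallyEq ?_
    filter_upwards [eventually_gt_nhds ht] with s hs
    simp [abs_of_pos hs]

lemma integral_one_sub_abs_div_two (a b : ℝ) :
    ∫ t in a..b, (1 - |t|) / 2 = (b / 2 - b * |b| / 4) - (a / 2 - a * |a| / 4) := by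
  refine integral_eq_sub_of_hasDerivAt (f := fun s => s / 2 - s * |s| / 4) (fun t _ => ?_)
    ((by fun_prop : Continuous fun t : ℝ => (1 - |t|) / 2).intervalIntegrable a b)
  exact (((hasDerivAt_id' t).div_const 2).sub ((hasDerivAt_mul_abs t).div_const 4)).congr_deriv
    (by ring)

lemma seqScore_eq_of_nonneg_of_le {d x : ℝ} (α : ℝ) (hx0 : 0 ≤ x) (hxd : x ≤ d) :
    seqScore d α x = (1 / 2) * (x ^ 2 * (α - 2) / 2 + x * α * (1 - d)) +
      (d - d ^ 2 / 2 - α * d + α * d ^ 2 / 2) := by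
  rw [seqScore, integral_one_sub_abs_div_two, integral_one_sub_abs_div_two,
    abs_of_nonneg (by linarith : 0 ≤ x + d), abs_of_nonpos (by linarith : x - d ≤ 0),
    abs_of_nonneg (by linarith : 0 ≤ d)]
  ring

lemma quadratic_le_of_two_mul_mul_add_eq_zero {a b v : ℝ} (ha : a ≤ 0)
    (hv : 2 * a * v + b = 0) (x : ℝ) : a * x ^ 2 + b * x ≤ a * v ^ 2 + b * v := by
  have hsplit : a * x ^ 2 + b * x = a * v ^ 2 + b * v + a * (x - v) ^ 2 := by
    linear_combination (x - v) * hv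
  linarith [mul_nonpos_of_nonpos_of_nonneg ha (sq_nonneg (x - v))]

theorem seqScore_triangular_inner_general (d α : ℝ)
    (hd1 : d ≤ 1 - d) (hα0 : 0 ≤ α) (hα2d : α ≤ 2 * d) :
    (∃ Cst : ℝ, ∀ x : ℝ, 0 ≤ x → x ≤ d →
        seqScore d α x = (1 / 2) * (x ^ 2 * (α - 2) / 2 + x * α * (1 - d)) + Cst) ∧
    (0 ≤ α * (1 - d) / (2 - α) ∧ α * (1 - d) / (2 - α) ≤ d) ∧
    (∀ x : ℝ, 0 ≤ x → x ≤ d →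
        seqScore d α x ≤ seqScore d α (α * (1 - d) / (2 - α))) := by
  have h2α : 0 < 2 - α := by linarith
  have hxs0 : 0 ≤ α * (1 - d) / (2 - α) :=
    div_nonneg (mul_nonneg hα0 (by linarith)) h2α.le
  have hxsd : α * (1 - d) / (2 - α) ≤ d := by
    rw [div_le_iff₀ h2α]
    linarith
  refine ⟨⟨_, fun x hx0 hxd => seqScore_eq_of_nonneg_of_le α hx0 hxd⟩, ⟨hxs0, hxsd⟩,
    fun x hx0 hxd => ?_⟩
  have hvertex : 2 * ((α - 2) / 4) * (α * (1 - d) / (2 - α)) + α * (1 - d) / 2 = 0 := by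
    field_simp
    ring
  have hmax := quadratic_le_of_two_mul_mul_add_eq_zero (by linarith) hvertex x
  rw [seqScore_eq_of_nonneg_of_le α hx0 hxd, seqScore_eq_of_nonneg_of_le α hxs0 hxsd]
  linarith

/-- Triangular distribution, first finalist at `0`: on `0 ≤ x ≤ d` the α-seqAV
objective is the quadratic `(1/2)(x²(α-2)/2 + xα(1-d)) + C`, and when
`α ≤ 2d` it is maximized on `[0,d]` at `x* = α(1-d)/(2-α)`. -/
theorem seqScore_triangular_inner (d α : ℝ)
    (hd0 : 0 < d) (hd1 : d ≤ 1 - d) (hα0 : 0 ≤ α) (hα1 : α ≤ 1) (hα2d : α ≤ 2 * d) :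
    (∃ Cst : ℝ, ∀ x : ℝ, 0 ≤ x → x ≤ d →
        seqScore d α x = (1 / 2) * (x ^ 2 * (α - 2) / 2 + x * α * (1 - d)) + Cst) ∧
    (0 ≤ α * (1 - d) / (2 - α) ∧ α * (1 - d) / (2 - α) ≤ d) ∧
    (∀ x : ℝ, 0 ≤ x → x ≤ d →
        seqScore d α x ≤ seqScore d α (α * (1 - d) / (2 - α))) :=
  seqScore_triangular_inner_general d α hd1 hα0 hα2d
end

section
/- In the triangular-density model with first finalist at 0, for a candidate at position x with d ≤ x ≤ 2d and x+d ≤ 1, the α-seqAV objective equals (1/2)(−αx²/2 + x(α(1+d) − 2d)) + C for a constant C, and for 2d ≤ α ≤ 2d/(1−d) and α > 0 it is maximized on [d,2d] at x* = 1 + d − 2d/α. -/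
open intervalIntegral

lemma int_abs_congr (a b : ℝ) (ha : 0 ≤ a) (hb : 0 ≤ b) :
    ∫ t in a..b, (1 - |t|) / 2 = ∫ t in a..b, (1 - t) / 2 := by
  apply intervalIntegral.integral_congr
  intro t ht
  rw [Set.mem_uIcc] at ht
  have h0 : 0 ≤ t := by rcases ht with ⟨h1, _⟩ | ⟨h1, _⟩ <;> linarith
  show (1 - |t|) / 2 = (1 - t) / 2
  rw [abs_of_nonneg h0]

lemma int_poly (a b : ℝ) : ∫ t in a..b, (1 - t) / 2 = (b - a) / 2 - (b ^ 2 - a ^ 2) / 4 := by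
  have h : ∫ t in a..b, (1 - t) / 2
      = ((∫ t in a..b, (1 : ℝ)) - ∫ t in a..b, t) / 2 := by
    rw [intervalIntegral.integral_div,
      intervalIntegral.integral_sub intervalIntegrable_const intervalIntegral.intervalIntegrable_id]
  rw [h, integral_id]
  simp
  ring

lemma seqScore_formula (d α x : ℝ) (hd0 : 0 < d) (hx1 : d ≤ x) (hx2 : x + d ≤ 1) :
    seqScore d α x = (1 / 2) * (-α * x ^ 2 / 2 + x * (α * (1 + d) - 2 * d)) + d * (1 - α) := by
  have h1 : (0:ℝ) ≤ x - d := by linarith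
  have h2 : (0:ℝ) ≤ x + d := by linarith
  unfold seqScore
  rw [int_abs_congr _ _ h1 h2, int_abs_congr _ _ h1 hd0.le, int_poly, int_poly]
  ring

/-- Triangular distribution, first finalist at `0`: on the region
`d ≤ x ≤ 2d`, `x + d ≤ 1`, the α-seqAV objective is the quadratic
`(1/2)(-αx²/2 + x(α(1+d) - 2d)) + C`, and for `2d ≤ α ≤ 2d/(1-d)` it is
maximized there at `x* = 1 + d - 2d/α`. -/
theorem seqScore_triangular_outer (d α : ℝ)
    (hd0 : 0 < d) (hd1 : d ≤ 1 / 2) (hα0 : 0 < α) (hα1 : α ≤ 1)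
    (hαlo : 2 * d ≤ α) (hαhi : α ≤ 2 * d / (1 - d)) :
    (∃ Cst : ℝ, ∀ x : ℝ, d ≤ x → x ≤ 2 * d → x + d ≤ 1 →
        seqScore d α x = (1 / 2) * (-α * x ^ 2 / 2 + x * (α * (1 + d) - 2 * d)) + Cst) ∧
    (d ≤ 1 + d - 2 * d / α ∧ 1 + d - 2 * d / α ≤ 2 * d ∧ (1 + d - 2 * d / α) + d ≤ 1) ∧
    (∀ x : ℝ, d ≤ x → x ≤ 2 * d → x + d ≤ 1 →
        seqScore d α x ≤ seqScore d α (1 + d - 2 * d / α)) := by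
  have h1d : (0:ℝ) < 1 - d := by linarith
  have hdiv : 2 * d / α ≤ 1 := by
    rw [div_le_one hα0]; exact hαlo
  have hdiv2 : 1 - d ≤ 2 * d / α := by
    rw [le_div_iff₀ hα0]
    calc (1 - d) * α = α * (1 - d) := by ring
    _ ≤ 2 * d / (1 - d) * (1 - d) := by
        apply mul_le_mul_of_nonneg_right hαhi h1d.le
    _ = 2 * d := by field_simp
  have hstar1 : d ≤ 1 + d - 2 * d / α := by linarith
  have hstar2 : 1 + d - 2 * d / α ≤ 2 * d := by linarith
  have hstar3 : (1 + d - 2 * d / α) + d ≤ 1 := by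
    have h2d : 2 * d ≤ 2 * d / α := by
      rw [le_div_iff₀ hα0]; nlinarith
    linarith
  refine ⟨⟨d * (1 - α), fun x hx1 _ hx3 => seqScore_formula d α x hd0 hx1 hx3⟩,
    ⟨hstar1, hstar2, hstar3⟩, fun x hx1 hx2 hx3 => ?_⟩
  rw [seqScore_formula d α x hd0 hx1 hx3,
    seqScore_formula d α _ hd0 hstar1 hstar3]
  have key : α * (1 + d - 2 * d / α) = α * (1 + d) - 2 * d := by
    field_simp
  nlinarith [mul_nonneg hα0.le (sq_nonneg (x - (1 + d - 2 * d / α))), key]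
end

section
/- Let S_V be the approval score function with a dominating b (so S_V(a) > S_V(b), S_V({x,a}) ≥ S_V({x,b}), and S_V(a) − S_V(b) ≥ S_V({x,a}) − S_V({x,b}) for all x), and let x be a candidate with S_V(x) > S_V(b) > 0 and S_V(a) > 0. Then (S_V(x) + S_V({x,b}))/S_V(b) > (S_V(x) + S_V({x,a}))/S_V(a). -/
/-- Key arithmetic inequality for the Pareto-efficiency of the sequential
Phragmén runoff rule: if `a` dominates `b` (score-wise) and `S_V(x) > S_V(b) > 0`,
then `(S_V(x)+S_V(xb))/S_V(b) > (S_V(x)+S_V(xa))/S_V(a)`. -/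
theorem seqPhragmen_key_ineq (Sx Sa Sb Sxa Sxb : ℕ)
    (hab : Sa > Sb) (hb0 : Sb > 0) (hxb : Sx > Sb)
    (hmono : Sxa ≥ Sxb) (hdiff : Sa - Sb ≥ Sxa - Sxb)
    (hxa_a : Sxa ≤ Sa) (hxb_b : Sxb ≤ Sb) (hxa_x : Sxa ≤ Sx) (hxb_x : Sxb ≤ Sx) :
    ((Sx : ℚ) + (Sxb : ℚ)) / (Sb : ℚ) > ((Sx : ℚ) + (Sxa : ℚ)) / (Sa : ℚ) := by
  have key : Sa + Sxb ≥ Sb + Sxa := by omega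
  have ha0 : (0:ℚ) < (Sa:ℚ) := by exact_mod_cast Nat.pos_of_ne_zero (by omega)
  have hb0' : (0:ℚ) < (Sb:ℚ) := by exact_mod_cast hb0
  rw [gt_iff_lt, div_lt_div_iff₀ ha0 hb0']
  have key' : (Sb:ℚ) + Sxa ≤ (Sa:ℚ) + Sxb := by exact_mod_cast key
  have hxb' : (Sb:ℚ) < Sx := by exact_mod_cast hxb
  have hab' : (Sb:ℚ) < Sa := by exact_mod_cast hab
  have hxbb : (Sxb:ℚ) ≥ 0 := by positivity
  have hxbx : (Sxa:ℚ) ≤ Sx := by exact_mod_cast hxa_x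
  nlinarith [mul_pos hb0' ha0]
end

section
/- For the α-seqAV rule with α < 1, if a dominates b in profile V and x1 is any fixed first finalist distinct from a and b, then the second-round objective f_{x1}(a) = S_V(a) − α·S_V({x1,a}) is strictly greater than f_{x1}(b) = S_V(b) − α·S_V({x1,b}); hence b is never selected as second finalist. -/
/-- For the α-seqAV rule with `α < 1`: if `a` dominates `b` and `x1` is the
first finalist (distinct from `a` and `b`), then the second-round objective of
`a` strictly exceeds that of `b`, so `b` is never selected as second finalist. -/
theorem alphaSeqAV_dominated {C : Type*} [DecidableEq C] {n : ℕ}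
    (A : Fin n → Finset C) (a b x1 : C) (hdom : Dominates A a b)
    (hx1a : x1 ≠ a) (hx1b : x1 ≠ b)
    (α : ℚ) (hα0 : 0 ≤ α) (hα1 : α < 1) :
    (appScore A a : ℚ) - α * (pairScore A x1 a : ℚ)
      > (appScore A b : ℚ) - α * (pairScore A x1 b : ℚ) := by
  obtain ⟨hsub, i0, hi0a, hi0b⟩ := hdom
  -- split appScore into pairScore + "solo" count
  have hsplit : ∀ y : C, appScore A y =
      pairScore A x1 y + (Finset.univ.filter (fun i => y ∈ A i ∧ x1 ∉ A i)).card := by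
    intro y
    unfold appScore pairScore
    rw [← Finset.card_union_of_disjoint]
    · congr 1
      ext i
      simp only [Finset.mem_union, Finset.mem_filter, Finset.mem_univ, true_and]
      tauto
    · rw [Finset.disjoint_filter]
      tauto
  -- strict score inequality
  have hS : appScore A b < appScore A a := by
    apply Finset.card_lt_card
    rw [Finset.ssubset_iff_of_subset]
    · exact ⟨i0, by simp [hi0a], by simp [hi0b]⟩
    · intro i hi
      simp only [Finset.mem_filter, Finset.mem_univ, true_and] at hi ⊢
      exact hsub i hi
  -- solo count inequality
  have hsolo : (Finset.univ.filter (fun i => b ∈ A i ∧ x1 ∉ A i)).card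
      ≤ (Finset.univ.filter (fun i => a ∈ A i ∧ x1 ∉ A i)).card := by
    apply Finset.card_le_card
    intro i hi
    simp only [Finset.mem_filter, Finset.mem_univ, true_and] at hi ⊢
    exact ⟨hsub i hi.1, hi.2⟩
  -- pair score inequality
  have hP : pairScore A x1 b ≤ pairScore A x1 a := by
    apply Finset.card_le_card
    intro i hi
    simp only [pairScore, Finset.mem_filter, Finset.mem_univ, true_and] at hi ⊢
    exact ⟨hi.1, hsub i hi.2⟩
  set da := (Finset.univ.filter (fun i => a ∈ A i ∧ x1 ∉ A i)).card
  set db := (Finset.univ.filter (fun i => b ∈ A i ∧ x1 ∉ A i)).card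
  have ha := hsplit a
  have hb := hsplit b
  have hSq : (appScore A b : ℚ) + 1 ≤ (appScore A a : ℚ) := by exact_mod_cast hS
  have hsoloq : (db : ℚ) ≤ (da : ℚ) := by exact_mod_cast hsolo
  have hPq : (pairScore A x1 b : ℚ) ≤ (pairScore A x1 a : ℚ) := by exact_mod_cast hP
  have haq : (appScore A a : ℚ) = (pairScore A x1 a : ℚ) + da := by exact_mod_cast ha
  have hbq : (appScore A b : ℚ) = (pairScore A x1 b : ℚ) + db := by exact_mod_cast hb
  nlinarith [mul_nonneg hα0 (sub_nonneg.2 hsoloq)]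
end
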